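/- arXiv:2503.05925 — 8 statements merged into one kernel-verified Lean document; each statement's English description precedes it below -/
import Mathlib

section
/- Let G = (U¹, U²) be a 2-player n×m normal-form game, let λ > 0, let ζ > 0, let i⁺ be a ζ-dominant row action, and let s be any mixed strategy for the column player. Then the quantal best response places probability at least 1/(1 + (n − 1)·exp(−λζ)) on the dominant action: QBR₁(s; λ, G)(i⁺) ≥ 1/(1 + (n − 1)·exp(−λζ)). -/
/-- The logit quantal best response of the row player, with precision `lam`, to the
column mixed strategy `s` in a game whose row-player payoff matrix is `U1`. -/
noncomputable def QBR {n m : ℕ} (U1 : Matrix (Fin n) (Fin m) ℝ)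
    (s : Fin m → ℝ) (lam : ℝ) (i : Fin n) : ℝ :=
  Real.exp (lam * ∑ j, s j * U1 i j) / ∑ i', Real.exp (lam * ∑ j, s j * U1 i' j)

/-- If `i⁺` is a `ζ`-dominant row action, then the quantal best response with
precision `λ > 0` to any column mixed strategy places probability at least
`1 / (1 + (n − 1)·exp(−λζ))` on `i⁺`. -/
theorem qbr_dominant_action_lower_bound {n m : ℕ}
    (U1 U2 : Matrix (Fin n) (Fin m) ℝ) (lam ζ : ℝ) (hlam : 0 < lam) (hζ : 0 < ζ)
    (ip : Fin n) (hdom : ∀ i : Fin n, i ≠ ip → ∀ j : Fin m, U1 ip j > U1 i j + ζ)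
    (s : Fin m → ℝ) (hs0 : ∀ j, 0 ≤ s j) (hs1 : ∑ j, s j = 1) :
    QBR U1 s lam ip ≥ 1 / (1 + ((n : ℝ) - 1) * Real.exp (-lam * ζ)) := by
  classical
  set a : ℝ := lam * ∑ j, s j * U1 ip j with ha
  set D : ℝ := 1 + ((n : ℝ) - 1) * Real.exp (-lam * ζ) with hD
  have hDpos : 0 < D := by
    have hn : (1 : ℝ) ≤ (n : ℝ) := by
      have : 0 < n := Fin.pos ip
      exact_mod_cast this
    have : 0 ≤ ((n : ℝ) - 1) * Real.exp (-lam * ζ) :=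
      mul_nonneg (by linarith) (Real.exp_pos _).le
    linarith
  -- key pointwise bound for i ≠ ip
  have key : ∀ i : Fin n, i ≠ ip →
      Real.exp (lam * ∑ j, s j * U1 i j) ≤ Real.exp a * Real.exp (-lam * ζ) := by
    intro i hi
    rw [← Real.exp_add]
    apply Real.exp_le_exp.mpr
    have hsum : (∑ j, s j * U1 i j) + ζ ≤ ∑ j, s j * U1 ip j := by
      have : ∑ j, (s j * U1 i j + s j * ζ) ≤ ∑ j, s j * U1 ip j := by
        apply Finset.sum_le_sum
        intro j _
        have := (hdom i hi j).le
        nlinarith [hs0 j]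
      have h2 : ∑ j, (s j * U1 i j + s j * ζ)
          = (∑ j, s j * U1 i j) + ζ := by
        rw [Finset.sum_add_distrib, ← Finset.sum_mul, hs1, one_mul]
      linarith
    rw [ha]
    nlinarith
  have hS : (∑ i', Real.exp (lam * ∑ j, s j * U1 i' j)) ≤ Real.exp a * D := by
    rw [← Finset.add_sum_erase _ _ (Finset.mem_univ ip)]
    have hb : ∑ i' ∈ Finset.univ.erase ip, Real.exp (lam * ∑ j, s j * U1 i' j)
        ≤ ∑ _i' ∈ Finset.univ.erase ip, Real.exp a * Real.exp (-lam * ζ) := by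
      apply Finset.sum_le_sum
      intro i hi
      exact key i (Finset.mem_erase.mp hi).1
    have hcard : ((Finset.univ.erase ip).card : ℝ) = (n : ℝ) - 1 := by
      rw [Finset.card_erase_of_mem (Finset.mem_univ ip)]
      simp
      have : 0 < n := Fin.pos ip
      rw [Nat.cast_sub this]
      simp
    rw [Finset.sum_const, nsmul_eq_mul, hcard] at hb
    rw [hD]
    ring_nf
    ring_nf at hb
    nlinarith [Real.exp_pos a]
  have hSpos : 0 < ∑ i', Real.exp (lam * ∑ j, s j * U1 i' j) :=
    Finset.sum_pos (fun i _ => Real.exp_pos _) ⟨ip, Finset.mem_univ ip⟩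
  have : 1 / D ≤ Real.exp a / (∑ i', Real.exp (lam * ∑ j, s j * U1 i' j)) := by
    rw [div_le_div_iff₀ hDpos hSpos]
    calc 1 * (∑ i', Real.exp (lam * ∑ j, s j * U1 i' j))
        = ∑ i', Real.exp (lam * ∑ j, s j * U1 i' j) := one_mul _
      _ ≤ Real.exp a * D := hS
  exact this
end

section
/- Let λ > 0 and let g be any dominance-responsive column-player behavioral model on 2×2 games. Then the row-player behavioral model q defined by q(G) = QBR₁(g(G); λ, G) is other-responsive: there exist two 2×2 games G = (U¹, U²) and G' = (U¹, V²) with identical row-player payoff matrices such that q(G) ≠ q(G'). -/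
/-- A 2-player `n×m` normal-form game: a pair of payoff matrices
(row player's payoffs, column player's payoffs). -/
abbrev Game (n m : ℕ) := Matrix (Fin n) (Fin m) ℝ × Matrix (Fin n) (Fin m) ℝ

/-- A column-player behavioral model `g` is dominance-responsive if there is a `ζ > 0`
such that in every game with a `ζ`-dominant column action `j⁺`, that action is the
strict mode of `g`'s prediction. -/
def DominanceResponsiveCol {n m : ℕ} (g : Game n m → Fin m → ℝ) : Prop :=
  ∃ ζ : ℝ, 0 < ζ ∧ ∀ G : Game n m, ∀ jp : Fin m,
    (∀ j : Fin m, j ≠ jp → ∀ i : Fin n, G.2 i jp > G.2 i j + ζ) →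
    ∀ j : Fin m, j ≠ jp → g G jp > g G j

lemma exp_frac (x y : ℝ) :
    Real.exp x / (Real.exp x + Real.exp y) = 1 / (1 + Real.exp (y - x)) := by
  have h : Real.exp y = Real.exp (y - x) * Real.exp x := by
    rw [← Real.exp_add]; ring_nf
  have h1 : (0:ℝ) < Real.exp x + Real.exp y :=
    add_pos (Real.exp_pos _) (Real.exp_pos _)
  have h2 : (0:ℝ) < 1 + Real.exp (y - x) :=
    add_pos one_pos (Real.exp_pos _)
  rw [div_eq_div_iff h1.ne' h2.ne']
  rw [h]; ring

/-- Quantal best response (with positive precision) to a dominance-responsive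
column-player behavioral model is other-responsive: there are two 2×2 games with the
same row-player payoff matrix on which the predictions differ. -/
theorem qbr_to_dominance_responsive_is_other_responsive (lam : ℝ) (hlam : 0 < lam)
    (g : Game 2 2 → Fin 2 → ℝ)
    (hg : ∀ G : Game 2 2, (∀ j, 0 ≤ g G j) ∧ ∑ j, g G j = 1)
    (hdr : DominanceResponsiveCol g) :
    ∃ U1 U2 V2 : Matrix (Fin 2) (Fin 2) ℝ,
      QBR U1 (g (U1, U2)) lam ≠ QBR U1 (g (U1, V2)) lam := by
  obtain ⟨ζ, hζ, hdr⟩ := hdr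
  refine ⟨!![1, 0; 0, 1], !![ζ+1, 0; ζ+1, 0], !![0, ζ+1; 0, ζ+1], ?_⟩
  set s := g (!![1, 0; 0, 1], !![ζ+1, 0; ζ+1, 0]) with hs
  set t := g (!![1, 0; 0, 1], !![0, ζ+1; 0, ζ+1]) with ht
  have hs01 : s 0 > s 1 := by
    apply hdr (!![1, 0; 0, 1], !![ζ+1, 0; ζ+1, 0]) 0 _ 1 (by decide)
    intro j hj i
    fin_cases j
    · exact absurd rfl hj
    · fin_cases i <;> · show (0:ℝ) + ζ < ζ + 1; linarith
  have ht01 : t 1 > t 0 := by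
    apply hdr (!![1, 0; 0, 1], !![0, ζ+1; 0, ζ+1]) 1 _ 0 (by decide)
    intro j hj i
    fin_cases j
    · fin_cases i <;> · show (0:ℝ) + ζ < ζ + 1; linarith
    · exact absurd rfl hj
  intro heq
  have heq0 := congrFun heq 0
  have key : ∀ u : Fin 2 → ℝ,
      QBR !![1, 0; 0, 1] u lam 0 = 1 / (1 + Real.exp (lam * (u 1 - u 0))) := by
    intro u
    have h1 : QBR !![1, 0; 0, 1] u lam 0
        = Real.exp (lam * u 0) / (Real.exp (lam * u 0) + Real.exp (lam * u 1)) := by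
      simp [QBR, Fin.sum_univ_two]
    rw [h1, exp_frac]
    ring_nf
  rw [key s, key t] at heq0
  have hlt : Real.exp (lam * (s 1 - s 0)) < Real.exp (lam * (t 1 - t 0)) := by
    apply Real.exp_lt_exp.2
    nlinarith
  have h1 : (0:ℝ) < 1 + Real.exp (lam * (s 1 - s 0)) :=
    add_pos one_pos (Real.exp_pos _)
  have hmono : 1 / (1 + Real.exp (lam * (t 1 - t 0)))
      < 1 / (1 + Real.exp (lam * (s 1 - s 0))) := by
    apply one_div_lt_one_div_of_lt h1
    linarith
  linarith [heq0, hmono]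
end

section
/- Fix n ≥ 2 and m ≥ 1, and let f(G) = Σ_{k=1}^K w_k·h_k(Φ_k(G)) be a convex combination of elementary models for the row player on n×m games. Suppose there is an index k with w_k > 0 such that for every b > 0 there exist x, x' ∈ ℝ² with φ_k(x) = φ_k(x') and x_1 − x'_1 > b. Then for every ζ > 0 there exists an n×m game G with a ζ-dominant row action i⁺ such that f(G)(i⁺) ≤ 1 − w_k/2. Consequently, f is not strongly dominance-responsive in the limit. -/
/-- Row action `ip` is `ζ`-dominant in a game with row-player payoffs `U1`. -/
def ZetaDominantRow {n m : ℕ} (U1 : Matrix (Fin n) (Fin m) ℝ) (ζ : ℝ) (ip : Fin n) : Prop :=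
  ∀ i : Fin n, i ≠ ip → ∀ j : Fin m, U1 ip j > U1 i j + ζ

/-- `Mval f ζ` is the infimum, over all `n×m` games `G` having a `ζ`-dominant row
action `i⁺`, of the probability `f G i⁺` that the model places on that action. -/
noncomputable def Mval {n m : ℕ} (f : Game n m → Fin n → ℝ) (ζ : ℝ) : ℝ :=
  sInf {p : ℝ | ∃ G : Game n m, ∃ ip : Fin n, ZetaDominantRow G.1 ζ ip ∧ p = f G ip}

/-- A row-player behavioral model is strongly dominance-responsive in the limit if
`M(f, ζ) → 1` as `ζ → ∞`. -/
def StronglyDomRespLimit {n m : ℕ} (f : Game n m → Fin n → ℝ) : Prop :=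
  Filter.Tendsto (fun ζ : ℝ => Mval f ζ) Filter.atTop (nhds 1)

/-- If some component `k` of a convex combination of elementary models has positive
weight and a potential function whose level sets contain pairs of points whose first
coordinates differ by an arbitrarily large amount, then for every `ζ > 0` there is a
game with a `ζ`-dominant row action on which `f` places probability at most
`1 − w_k/2`; consequently, `f` is not strongly dominance-responsive in the limit. -/
theorem wide_level_sets_not_strongly_dominance_responsive {n m K : ℕ}
    (hn : 2 ≤ n) (hm : 1 ≤ m)
    (w : Fin K → ℝ) (hw0 : ∀ k, 0 ≤ w k) (hw1 : ∑ k, w k = 1)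
    (φ : Fin K → ℝ → ℝ → ℝ)
    (h : Fin K → Matrix (Fin n) (Fin m) ℝ → Fin n → ℝ)
    (hprob : ∀ k X, (∀ i, 0 ≤ h k X i) ∧ ∑ i, h k X i = 1)
    (f : Game n m → Fin n → ℝ)
    (hf : ∀ (G : Game n m) (i : Fin n),
      f G i = ∑ k, w k * h k (fun a b => φ k (G.1 a b) (G.2 a b)) i)
    (k : Fin K) (hwk : 0 < w k)
    (hlevel : ∀ b : ℝ, 0 < b → ∃ x y x' y' : ℝ, φ k x y = φ k x' y' ∧ x - x' > b) :
    (∀ ζ : ℝ, 0 < ζ → ∃ G : Game n m, ∃ ip : Fin n,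
      ZetaDominantRow G.1 ζ ip ∧ f G ip ≤ 1 - w k / 2) ∧
    ¬ StronglyDomRespLimit f := by
  -- f is always nonnegative
  have hfnonneg : ∀ (G : Game n m) (i : Fin n), 0 ≤ f G i := by
    intro G i
    rw [hf]
    exact Finset.sum_nonneg fun k' _ =>
      mul_nonneg (hw0 k') ((hprob k' _).1 i)
  -- h components are ≤ 1
  have hle1 : ∀ k' X i, h k' X i ≤ 1 := by
    intro k' X i
    have := Finset.single_le_sum (f := h k' X) (fun j _ => (hprob k' X).1 j)
      (Finset.mem_univ i)
    rwa [(hprob k' X).2] at this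
  -- main bound: if the k-th component's potential matrix gives mass q to ip,
  -- then f G ip ≤ w k * q + (1 - w k)
  have hbound : ∀ (G : Game n m) (ip : Fin n),
      f G ip ≤ w k * h k (fun a b => φ k (G.1 a b) (G.2 a b)) ip + (1 - w k) := by
    intro G ip
    rw [hf]
    have hsplit := Finset.sum_erase_add Finset.univ
      (fun k' => w k' * h k' (fun a b => φ k' (G.1 a b) (G.2 a b)) ip) (Finset.mem_univ k)
    rw [← hsplit, add_comm]
    gcongr
    calc ∑ k' ∈ Finset.univ.erase k,
          w k' * h k' (fun a b => φ k' (G.1 a b) (G.2 a b)) ip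
        ≤ ∑ k' ∈ Finset.univ.erase k, w k' := by
          apply Finset.sum_le_sum
          intro k' _
          calc w k' * h k' _ ip ≤ w k' * 1 := by
                exact mul_le_mul_of_nonneg_left (hle1 k' _ ip) (hw0 k')
            _ = w k' := mul_one _
      _ = 1 - w k := by
          have := Finset.sum_erase_add Finset.univ w (Finset.mem_univ k)
          rw [hw1] at this
          linarith
  have key : ∀ ζ : ℝ, 0 < ζ → ∃ G : Game n m, ∃ ip : Fin n,
      ZetaDominantRow G.1 ζ ip ∧ f G ip ≤ 1 - w k / 2 := by
    intro ζ hζ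
    obtain ⟨x, y, x', y', hφeq, hgap⟩ := hlevel ζ hζ
    set i0 : Fin n := ⟨0, by omega⟩
    set i1 : Fin n := ⟨1, by omega⟩
    have hne : i0 ≠ i1 := by simp [i0, i1, Fin.ext_iff]
    -- game A: row i0 gets (x,y), others (x',y'); game B: row i1 gets (x,y)
    let A : Game n m := (fun i _ => if i = i0 then x else x',
                         fun i _ => if i = i0 then y else y')
    let B : Game n m := (fun i _ => if i = i1 then x else x',
                         fun i _ => if i = i1 then y else y')
    have hdomA : ZetaDominantRow A.1 ζ i0 := by
      intro i hi j
      rw [show A.1 = (fun i (_ : Fin m) => if i = i0 then x else x') from rfl]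
      simp only [if_pos rfl, if_neg hi, eq_self_iff_true, if_true]
      linarith
    have hdomB : ZetaDominantRow B.1 ζ i1 := by
      intro i hi j
      rw [show B.1 = (fun i (_ : Fin m) => if i = i1 then x else x') from rfl]
      simp only [if_pos rfl, if_neg hi, eq_self_iff_true, if_true]
      linarith
    -- both potential matrices for component k are the constant matrix
    have hΦA : (fun a b => φ k (A.1 a b) (A.2 a b)) = (fun _ _ => φ k x y) := by
      funext a b
      simp only [A]
      by_cases ha : a = i0 <;> simp [ha, hφeq]
    have hΦB : (fun a b => φ k (B.1 a b) (B.2 a b)) = (fun _ _ => φ k x y) := by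
      funext a b
      simp only [B]
      by_cases ha : a = i1 <;> simp [ha, hφeq]
    set p := h k (fun _ _ => φ k x y) with hp
    have hpsum : p i0 + p i1 ≤ 1 := by
      have hsum := (hprob k (fun _ _ => φ k x y)).2
      have h2 := Finset.sum_le_sum_of_subset_of_nonneg
        (s := ({i0, i1} : Finset (Fin n))) (Finset.subset_univ _)
        (fun i _ _ => (hprob k (fun _ _ => φ k x y)).1 i)
      rw [hsum, Finset.sum_pair hne] at h2
      exact h2
    by_cases hc : p i0 ≤ 1 / 2
    · refine ⟨A, i0, hdomA, ?_⟩
      have := hbound A i0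
      rw [hΦA, ← hp] at this
      nlinarith [this, hc, hwk]
    · refine ⟨B, i1, hdomB, ?_⟩
      have hp1 : p i1 ≤ 1 / 2 := by linarith
      have := hbound B i1
      rw [hΦB, ← hp] at this
      nlinarith [this, hp1, hwk]
  refine ⟨key, ?_⟩
  intro ht
  -- Mval f ζ ≤ 1 - w k / 2 for all ζ > 0
  have hM : ∀ ζ : ℝ, 0 < ζ → Mval f ζ ≤ 1 - w k / 2 := by
    intro ζ hζ
    obtain ⟨G, ip, hdom, hle⟩ := key ζ hζ
    have hmem : f G ip ∈ {p : ℝ | ∃ G : Game n m, ∃ ip : Fin n,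
        ZetaDominantRow G.1 ζ ip ∧ p = f G ip} := ⟨G, ip, hdom, rfl⟩
    have hbdd : BddBelow {p : ℝ | ∃ G : Game n m, ∃ ip : Fin n,
        ZetaDominantRow G.1 ζ ip ∧ p = f G ip} := by
      refine ⟨0, ?_⟩
      rintro p ⟨G', ip', _, rfl⟩
      exact hfnonneg G' ip'
    exact le_trans (csInf_le hbdd hmem) hle
  have hev : ∀ᶠ ζ in Filter.atTop, Mval f ζ > 1 - w k / 2 :=
    ht (Ioi_mem_nhds (by linarith))
  obtain ⟨ζ, hζ1, hζ2⟩ := (hev.and (Filter.eventually_ge_atTop 1)).exists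
  exact absurd hζ1 (not_lt.mpr (hM ζ (by linarith)))
end

section
/- Fix n ≥ 2 and m ≥ 1, and let f(G) = Σ_{k=1}^K w_k·h_k(Φ_k(G)) be a convex combination of elementary models for the row player on n×m games in which every potential function φ_k is either dictatorial or non-encoding. Then f is not other-responsive, or f is not strongly dominance-responsive in the limit. -/
/-- A function `φ : ℝ² → ℝ` (curried) is dictatorial if it is completely determined
by one of its inputs. -/
def Dictatorial (φ : ℝ → ℝ → ℝ) : Prop :=
  (∀ x y y' : ℝ, φ x y = φ x y') ∨ (∀ x x' y : ℝ, φ x y = φ x' y)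

/-- A function `φ : ℝ² → ℝ` (curried) is non-encoding if, for each coordinate and
every `b > 0`, there exist two points on which `φ` agrees but whose values in that
coordinate differ by more than `b`. -/
def NonEncoding (φ : ℝ → ℝ → ℝ) : Prop :=
  (∀ b : ℝ, 0 < b → ∃ x y x' y' : ℝ, φ x y = φ x' y' ∧ |x - x'| > b) ∧
  (∀ b : ℝ, 0 < b → ∃ x y x' y' : ℝ, φ x y = φ x' y' ∧ |y - y'| > b)

/-- A row-player behavioral model is other-responsive if it differs on two games
which have identical row-player payoffs. -/
def OtherResponsive {n m : ℕ} (f : Game n m → Fin n → ℝ) : Prop :=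
  ∃ U1 U2 V2 : Matrix (Fin n) (Fin m) ℝ, f (U1, U2) ≠ f (U1, V2)

/-- A convex combination of elementary models, all of whose potential functions are
dictatorial or non-encoding, is either not other-responsive or not strongly
dominance-responsive in the limit. -/
theorem elementary_combination_not_both_responsive {n m K : ℕ}
    (hn : 2 ≤ n) (hm : 1 ≤ m)
    (w : Fin K → ℝ) (hw0 : ∀ k, 0 ≤ w k) (hw1 : ∑ k, w k = 1)
    (φ : Fin K → ℝ → ℝ → ℝ)
    (hpot : ∀ k, Dictatorial (φ k) ∨ NonEncoding (φ k))
    (h : Fin K → Matrix (Fin n) (Fin m) ℝ → Fin n → ℝ)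
    (hprob : ∀ k X, (∀ i, 0 ≤ h k X i) ∧ ∑ i, h k X i = 1)
    (f : Game n m → Fin n → ℝ)
    (hf : ∀ (G : Game n m) (i : Fin n),
      f G i = ∑ k, w k * h k (fun a b => φ k (G.1 a b) (G.2 a b)) i) :
    ¬ OtherResponsive f ∨ ¬ StronglyDomRespLimit f := by
  by_cases hOR : OtherResponsive f
  · right
    intro hSD
    -- Bounds on h
    have hle1 : ∀ k X i, h k X i ≤ 1 := by
      intro k X i
      have h1 := (hprob k X).1
      have h2 := (hprob k X).2
      calc h k X i ≤ ∑ j, h k X j :=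
        Finset.single_le_sum (fun j _ => h1 j) (Finset.mem_univ i)
      _ = 1 := h2
    have hfnn : ∀ (G : Game n m) (i : Fin n), 0 ≤ f G i := by
      intro G i
      rw [hf]
      exact Finset.sum_nonneg fun k _ =>
        mul_nonneg (hw0 k) ((hprob k _).1 i)
    -- key: every component with positive weight is dictated by the first coordinate
    have key : ∀ k, ¬ (∀ x y y' : ℝ, φ k x y = φ k x y') → w k = 0 := by
      intro k hk
      by_contra hw
      have hwpos : 0 < w k := lt_of_le_of_ne (hw0 k) (Ne.symm hw)
      have hle : ∀ ε : ℝ, 0 < ε → w k ≤ ε := by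
        intro ε hε
        have hev : ∀ᶠ ζ in Filter.atTop, Mval f ζ > 1 - ε / 2 ∧ (0:ℝ) < ζ := by
          refine (hSD.eventually (eventually_gt_nhds ?_)).and (Filter.eventually_gt_atTop 0)
          linarith
        obtain ⟨ζ, hMζ, hζ⟩ := hev.exists
        -- get the two pairs of payoffs
        obtain ⟨a, c2, a', c2', heq, hineq⟩ :
            ∃ a c2 a' c2' : ℝ, φ k a c2 = φ k a' c2' ∧ a > a' + ζ := by
          rcases hpot k with (hd1 | hd2) | hne
          · exact absurd hd1 hk
          · exact ⟨ζ + 1, 0, 0, 0, hd2 (ζ + 1) 0 0, by linarith⟩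
          · obtain ⟨x, y, x', y', he, hb⟩ := hne.1 ζ hζ
            rcases abs_cases (x - x') with ⟨h1, _⟩ | ⟨h1, _⟩
            · exact ⟨x, y, x', y', he, by linarith [hb, h1]⟩
            · exact ⟨x', y', x, y, he.symm, by rw [h1] at hb; linarith⟩
        -- the family of games
        set A : Fin n → Matrix (Fin n) (Fin m) ℝ :=
          fun ip i j => if i = ip then a else a' with hA
        set B : Fin n → Matrix (Fin n) (Fin m) ℝ :=
          fun ip i j => if i = ip then c2 else c2' with hB
        have hdom : ∀ ip, ZetaDominantRow (A ip) ζ ip := by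
          intro ip i hi j
          simp only [hA, if_pos rfl, if_neg hi]
          linarith
        set P : Matrix (Fin n) (Fin m) ℝ := fun _ _ => φ k a' c2' with hP
        have hPot : ∀ ip : Fin n,
            (fun i j => φ k (A ip i j) (B ip i j)) = P := by
          intro ip
          funext i j
          by_cases hi : i = ip <;> simp [hA, hB, hP, hi, heq]
        -- lower bound from Mval
        have hMf : ∀ ip : Fin n, 1 - ε / 2 ≤ f (A ip, B ip) ip := by
          intro ip
          have hmem : f (A ip, B ip) ip ∈
              {p : ℝ | ∃ G : Game n m, ∃ ip' : Fin n, ZetaDominantRow G.1 ζ ip' ∧ p = f G ip'} :=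
            ⟨(A ip, B ip), ip, hdom ip, rfl⟩
          have hbdd : BddBelow
              {p : ℝ | ∃ G : Game n m, ∃ ip' : Fin n, ZetaDominantRow G.1 ζ ip' ∧ p = f G ip'} := by
            refine ⟨0, ?_⟩
            rintro p ⟨G, ip', _, rfl⟩
            exact hfnn G ip'
          have := csInf_le hbdd hmem
          have : Mval f ζ ≤ f (A ip, B ip) ip := this
          linarith
        -- per-component bound
        have hterm : ∀ ip : Fin n, w k - ε / 2 ≤ w k * h k P ip := by
          intro ip
          have hfG := hf (A ip, B ip) ip
          have hrest : ∑ j ∈ Finset.univ.erase k,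
              w j * h j (fun a b => φ j ((A ip) a b) ((B ip) a b)) ip ≤ 1 - w k := by
            have h1 : ∑ j ∈ Finset.univ.erase k,
                w j * h j (fun a b => φ j ((A ip) a b) ((B ip) a b)) ip ≤
                ∑ j ∈ Finset.univ.erase k, w j := by
              refine Finset.sum_le_sum fun j _ => ?_
              calc w j * h j _ ip ≤ w j * 1 :=
                mul_le_mul_of_nonneg_left (hle1 j _ ip) (hw0 j)
              _ = w j := mul_one _
            have h2 : ∑ j ∈ Finset.univ.erase k, w j = 1 - w k := by
              rw [Finset.sum_erase_eq_sub (Finset.mem_univ k), hw1]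
            linarith
          have hsplit : f (A ip, B ip) ip =
              w k * h k (fun a b => φ k ((A ip) a b) ((B ip) a b)) ip +
              ∑ j ∈ Finset.univ.erase k,
                w j * h j (fun a b => φ j ((A ip) a b) ((B ip) a b)) ip := by
            rw [hfG, ← Finset.add_sum_erase _ _ (Finset.mem_univ k)]
          rw [hPot ip] at hsplit
          have := hMf ip
          linarith
        -- two distinct dominant actions
        have h01 : (⟨0, by omega⟩ : Fin n) ≠ (⟨1, by omega⟩ : Fin n) := by
          simp [Fin.ext_iff]
        have hsum2 : h k P ⟨0, by omega⟩ + h k P ⟨1, by omega⟩ ≤ 1 := by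
          have h2 := (hprob k P).2
          have h1 := (hprob k P).1
          have : ∑ i ∈ ({⟨0, by omega⟩, ⟨1, by omega⟩} : Finset (Fin n)), h k P i ≤
              ∑ i, h k P i :=
            Finset.sum_le_sum_of_subset_of_nonneg (Finset.subset_univ _)
              (fun i _ _ => h1 i)
          rw [Finset.sum_pair h01] at this
          linarith
        have ht0 := hterm ⟨0, by omega⟩
        have ht1 := hterm ⟨1, by omega⟩
        nlinarith [mul_le_mul_of_nonneg_left hsum2 (hw0 k)]
      have := hle (w k / 2) (by linarith)
      linarith
    -- derive contradiction with other-responsiveness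
    obtain ⟨U1, U2, V2, hne⟩ := hOR
    apply hne
    funext i
    rw [hf, hf]
    refine Finset.sum_congr rfl fun k _ => ?_
    by_cases hwk : w k = 0
    · simp [hwk]
    · have hdict : ∀ x y y' : ℝ, φ k x y = φ k x y' := by
        by_contra hc
        exact hwk (key k hc)
      congr 1
      congr 1
      funext a b
      exact hdict (U1 a b) (U2 a b) (V2 a b)
  · left; exact hOR
end

section
/- Fix n ≥ 2 and m ≥ 2, and let f(G) = Σ_{k=1}^K w_k·h_k(Φ_k(G)) be a convex combination of elementary models for the row player on n×m games in which every potential function is linear, φ_k(x, y) = θ_x^k·x + θ_y^k·y. Then f is weakly non-strategic: there do not exist a precision λ > 0 and a dominance-responsive column-player behavioral model g on n×m games such that f(G) = QBR₁(g(G); λ, G) for every n×m game G. -/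
/-! On games whose row payoffs `U1 i j = a i` do not depend on the column, the quantal best
response is `softmax (lam • a)` whatever the column player does, so the mixture has to reproduce
it there. A model with `θy k ≠ 0` is blind to moving `U1` and `U2` together along the kernel of
`(x, y) ↦ θx k * x + θy k * y`; a bounded function of `∑ k, t k` that is a sum of terms each blind
to one coordinate `t k` is constant (take differences in one coordinate after the other; a bounded
additive function on `ℝ` vanishes). Hence the softmax minus the contribution of the models with
`θy k = 0` is constant, and since the softmax comes arbitrarily close to `0` and to `1`, those
models carry all the weight. The mixture then ignores `U2`, while the quantal best response to a
dominance-responsive column player does not: for a suitable fixed `U1`, making one or the other of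
two columns dominant reverses the order of two rows. -/

open Finset Function

theorem apply_eq_apply_zero_of_bounded_of_sub_eq {P : ℝ → ℝ} {B : ℝ} (hB : ∀ x, |P x| ≤ B)
    (hP : ∀ x s, P (x + s) - P x = P s - P 0) (s : ℝ) : P s = P 0 := by
  have hmul : ∀ j : ℕ, P (j * s) - P 0 = j * (P s - P 0) := by
    intro j
    induction j with
    | zero => simp
    | succ j ih =>
      have := hP (j * s) s
      push_cast
      rw [add_one_mul]
      linarith
  have hle : ∀ j : ℕ, j * |P s - P 0| ≤ 2 * B := fun j => by
    have := abs_sub (P (j * s)) (P 0)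
    rw [hmul, abs_mul, Nat.abs_cast] at this
    linarith [hB (j * s), hB 0]
  obtain ⟨j, hj⟩ := exists_nat_gt (2 * B / |P s - P 0|)
  by_contra hne
  have hpos : 0 < |P s - P 0| := abs_pos.mpr (sub_ne_zero.mpr hne)
  rw [div_lt_iff₀ hpos] at hj
  linarith [hle j]

theorem apply_eq_apply_zero_of_eq_sum_of_blind {ι : Type*} [DecidableEq ι] {T : Finset ι}
    (hT : T.Nonempty) {P : ℝ → ℝ} {B : ℝ} (hB : ∀ x, |P x| ≤ B) {ψ : ι → (ι → ℝ) → ℝ}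
    (hψ : ∀ k ∈ T, ∀ t s, ψ k (update t k s) = ψ k t)
    (hP : ∀ t, P (∑ k ∈ T, t k) = ∑ k ∈ T, ψ k t) (x : ℝ) : P x = P 0 := by
  induction hT using Finset.Nonempty.cons_induction generalizing P B ψ x with
  | singleton k =>
    have hx := hP (update 0 k x)
    have h0 := hP 0
    simp only [sum_singleton, update_self, Pi.zero_apply] at hx h0
    rw [hx, h0, ← hψ k (mem_singleton_self k) 0 x]
  | cons k T hk hT ih =>
    refine apply_eq_apply_zero_of_bounded_of_sub_eq hB (fun y s => ?_) x
    -- The increment `z ↦ P (z + s) - P z` has the same structure, without the coordinate `k`.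
    have := ih (P := fun z => P (z + s) - P z) (B := 2 * B)
      (ψ := fun l t => ψ l (update t k s) - ψ l (update t k 0)) (fun z => (abs_sub _ _).trans (by linarith [hB (z + s), hB z])) ?_ ?_ y
    · simpa using this
    · intro l hl t r
      have hlk : l ≠ k := ne_of_mem_of_not_mem hl hk
      simp only [update_comm hlk, hψ l (mem_cons_of_mem hl)]
    · intro t
      have hsum : ∀ r, ∑ l ∈ cons k T hk, update t k r l = r + ∑ l ∈ T, t l := fun r => by
        rw [sum_cons, update_self]
        congr 1
        exact sum_congr rfl fun l hl => update_of_ne (ne_of_mem_of_not_mem hl hk) r t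
      have hs := hP (update t k s)
      have h0 := hP (update t k 0)
      rw [hsum, sum_cons, hψ k (mem_cons_self k T)] at hs h0
      rw [zero_add] at h0
      simp only [sum_sub_distrib]
      rw [add_comm, hs, h0]
      ring

theorem sum_update_mul_of_eq_zero {ι R : Type*} [DecidableEq ι] [NonUnitalNonAssocSemiring R]
    {T : Finset ι} {e : ι → R} {k : ι} (he : e k = 0) (t : ι → R) (s : R) :
    ∑ l ∈ T, update t k s l * e l = ∑ l ∈ T, t l * e l := by
  refine sum_congr rfl fun l _ => ?_
  rcases eq_or_ne l k with rfl | hl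
  · simp [he]
  · rw [update_of_ne hl]

theorem eq_of_forall_eq_sum_linear_potential {ι κ K : Type*} [DecidableEq K] {T : Finset K}
    {θx θy : K → ℝ} (hθ : ∀ k ∈ T, θy k ≠ 0) {H : K → (ι → κ → ℝ) → ℝ}
    {P : (ι → ℝ) → ℝ} {B : ℝ} (hB : ∀ a, |P a| ≤ B)
    (hP : ∀ a (V : ι → κ → ℝ), P a = ∑ k ∈ T, H k fun i j => θx k * a i + θy k * V i j)
    (a a' : ι → ℝ) : P a = P a' := by
  rcases T.eq_empty_or_nonempty with rfl | hT
  · simp only [sum_empty] at hP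
    rw [hP a 0, hP a' 0]
  -- Along `U1 = a + (∑ t) • α`, `V = (∑ t l * c l) • α`, the `k`-th potential does not see `t k`.
  set c : K → ℝ := fun k => -θx k / θy k
  set α := a' - a
  have hc : ∀ k ∈ T, θx k + θy k * c k = 0 := fun k hk => by
    simp only [c]; field_simp [hθ k hk]; ring
  let Pα : ℝ → ℝ := fun σ => P (a + σ • α)
  have key := apply_eq_apply_zero_of_eq_sum_of_blind hT (P := Pα) (fun σ => hB _)
    (ψ := fun k t => H k fun i _ => θx k * a i + (∑ l ∈ T, t l * (θx k + θy k * c l)) * α i)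
    (fun k hk t s => by
      rw [sum_update_mul_of_eq_zero (e := fun l => θx k + θy k * c l) (hc k hk)])
    (fun t => ?_) 1
  · simpa [Pα, α] using key.symm
  · simp only [Pα, hP _ fun i _ => (∑ l ∈ T, t l * c l) * α i]
    refine sum_congr rfl fun k _ => congrArg (H k) ?_
    ext i j
    simp only [Pi.add_apply, Pi.smul_apply, smul_eq_mul, mul_add, sum_mul, Finset.mul_sum]
    rw [add_assoc, ← sum_add_distrib]
    congr 1
    exact sum_congr rfl fun l _ => by ring

theorem weight_eq_zero_of_forall_sum_eq {ι κ K : Type*} [Fintype K] {w : K → ℝ}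
    (hw0 : ∀ k, 0 ≤ w k) (hw1 : ∑ k, w k = 1) {θx θy : K → ℝ} {H : K → (ι → κ → ℝ) → ℝ}
    (hH : ∀ k X, 0 ≤ H k X ∧ H k X ≤ 1) {Q : (ι → ℝ) → ℝ}
    (hQ0 : ∀ ε > 0, ∃ a, Q a < ε) (hQ1 : ∀ ε > 0, ∃ a, 1 - ε < Q a)
    (hQ : ∀ a (V : ι → κ → ℝ), ∑ k, w k * H k (fun i j => θx k * a i + θy k * V i j) = Q a)
    {k : K} (hk : θy k ≠ 0) : w k = 0 := by
  classical
  set T := univ.filter (θy · ≠ 0)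
  set F : (ι → ℝ) → ℝ := fun a => ∑ k ∈ Tᶜ, w k * H k fun i _ => θx k * a i
  have hF : ∀ a, 0 ≤ F a ∧ F a ≤ ∑ k ∈ Tᶜ, w k := fun a =>
    ⟨sum_nonneg fun k _ => mul_nonneg (hw0 k) (hH k _).1,
      sum_le_sum fun k _ => mul_le_of_le_one_right (hw0 k) (hH k _).2⟩
  have hsplit : ∀ a (V : ι → κ → ℝ),
      Q a - F a = ∑ k ∈ T, w k * H k fun i j => θx k * a i + θy k * V i j := by
    intro a V
    rw [← hQ a V, ← sum_add_sum_compl T, add_sub_assoc, add_eq_left, sub_eq_zero]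
    refine sum_congr rfl fun k hk => ?_
    have hθy : θy k = 0 := by simpa [T] using hk
    simp [hθy]
  have hP : ∀ a, 0 ≤ Q a - F a ∧ Q a - F a ≤ 1 := fun a => by
    rw [hsplit a 0]
    exact ⟨sum_nonneg fun k _ => mul_nonneg (hw0 k) (hH k _).1,
      (sum_le_sum fun k _ => mul_le_of_le_one_right (hw0 k) (hH k _).2).trans
        (hw1 ▸ sum_le_univ_sum_of_nonneg hw0)⟩
  have hconst : ∀ a a', Q a - F a = Q a' - F a' :=
    eq_of_forall_eq_sum_linear_potential (T := T) (fun k hk => (mem_filter.mp hk).2)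
      (H := fun k X => w k * H k X) (B := 1) (fun a => abs_le.mpr ⟨by linarith [hP a], (hP a).2⟩)
      hsplit
  have hnonpos : ∀ a, Q a - F a ≤ 0 := fun a => le_of_forall_pos_lt_add fun ε hε => by
    obtain ⟨a', ha'⟩ := hQ0 ε hε
    linarith [hconst a a', (hF a').1]
  have hTc : 1 ≤ ∑ k ∈ Tᶜ, w k := le_of_forall_pos_lt_add fun ε hε => by
    obtain ⟨a, ha⟩ := hQ1 ε hε
    linarith [hnonpos a, (hF a).2]
  have hT : ∑ k ∈ T, w k = 0 := by
    linarith [sum_add_sum_compl T w, sum_nonneg fun k (_ : k ∈ T) => hw0 k]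
  exact (sum_eq_zero_iff_of_nonneg fun k _ => hw0 k).mp hT k (mem_filter.mpr ⟨mem_univ k, hk⟩)

noncomputable def softmax {ι : Type*} [Fintype ι] (v : ι → ℝ) (i : ι) : ℝ :=
  Real.exp (v i) / ∑ j, Real.exp (v j)

section Softmax

variable {ι : Type*} [Fintype ι]

theorem softmax_lt_softmax_iff {v : ι → ℝ} {i j : ι} : softmax v i < softmax v j ↔ v i < v j := by
  have : 0 < ∑ l, Real.exp (v l) := sum_pos (fun l _ => Real.exp_pos _) ⟨i, mem_univ i⟩
  rw [softmax, softmax, div_lt_div_iff_of_pos_right this, Real.exp_lt_exp]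

variable [DecidableEq ι]

theorem softmax_single_self (i : ι) (x : ℝ) :
    softmax (Pi.single i x) i = Real.exp x / (Real.exp x + #{i}ᶜ) := by
  rw [softmax, Fintype.sum_eq_add_sum_compl i, Pi.single_eq_same,
    sum_congr rfl fun j hj => by rw [Pi.single_eq_of_ne (by simpa using hj), Real.exp_zero]]
  simp

variable [Nontrivial ι]

theorem card_compl_singleton_pos (i : ι) : (0 : ℝ) < #{i}ᶜ := by
  obtain ⟨j, hj⟩ := exists_ne i
  exact_mod_cast card_pos.mpr ⟨j, by simpa using hj⟩

theorem exists_softmax_lt (i : ι) {ε : ℝ} (hε : 0 < ε) : ∃ v, softmax v i < ε := by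
  have hc := card_compl_singleton_pos i
  refine ⟨Pi.single i (Real.log (ε * #{i}ᶜ)), ?_⟩
  rw [softmax_single_self, Real.exp_log (by positivity), div_lt_iff₀ (by positivity)]
  nlinarith [mul_pos hε hc]

theorem exists_one_sub_lt_softmax (i : ι) {ε : ℝ} (hε : 0 < ε) : ∃ v, 1 - ε < softmax v i := by
  have hc := card_compl_singleton_pos i
  refine ⟨Pi.single i (Real.log (#{i}ᶜ / ε)), ?_⟩
  rw [softmax_single_self, Real.exp_log (by positivity), lt_div_iff₀ (by positivity)]
  field_simp
  nlinarith [mul_pos hε hc]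

end Softmax

theorem QBR_eq_softmax {n m : ℕ} (U1 : Matrix (Fin n) (Fin m) ℝ) (s : Fin m → ℝ) (lam : ℝ) :
    QBR U1 s lam = softmax fun i => lam * ∑ j, s j * U1 i j :=
  rfl

theorem QBR_eq_softmax_of_forall_eq {n m : ℕ} {U1 : Matrix (Fin n) (Fin m) ℝ} {a : Fin n → ℝ}
    (hU1 : ∀ i j, U1 i j = a i) {s : Fin m → ℝ} (hs : ∑ j, s j = 1) (lam : ℝ) :
    QBR U1 s lam = softmax (lam • a) := by
  rw [QBR_eq_softmax]
  congr 1
  ext i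
  simp [hU1, ← sum_mul, hs]

theorem DominanceResponsiveCol.exists_lt {n m : ℕ} {g : Game n m → Fin m → ℝ}
    (hg : DominanceResponsiveCol g) (U1 : Matrix (Fin n) (Fin m) ℝ) {j j' : Fin m}
    (hj : j' ≠ j) : ∃ U2, g (U1, U2) j' < g (U1, U2) j := by
  obtain ⟨ζ, hζ, hdom⟩ := hg
  refine ⟨fun _ l => if l = j then ζ + 1 else 0, hdom _ j (fun l hl i => ?_) j' hj⟩
  simp [hl]

theorem DominanceResponsiveCol.not_forall_eq_QBR {n m : ℕ} {g : Game n m → Fin m → ℝ}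
    (hg : DominanceResponsiveCol g) (hn : 2 ≤ n) (hm : 2 ≤ m) {f : Game n m → Fin n → ℝ}
    (hf : ∀ U1 U2 U2', f (U1, U2) = f (U1, U2')) {lam : ℝ} (hlam : 0 < lam) :
    ¬ ∀ G, f G = QBR G.1 (g G) lam := by
  intro hQ
  have := Fin.nontrivial_iff_two_le.mpr hn
  have := Fin.nontrivial_iff_two_le.mpr hm
  obtain ⟨i0, i1, hi⟩ := exists_pair_ne (Fin n)
  obtain ⟨j0, j1, hj⟩ := exists_pair_ne (Fin m)
  set U1 : Matrix (Fin n) (Fin m) ℝ := fun i => if i = i0 then Pi.single j0 1 else Pi.single j1 1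
  have hlt : ∀ U2 {i i' j j'}, (∀ s : Fin m → ℝ, ∑ l, s l * U1 i l = s j) →
      (∀ s : Fin m → ℝ, ∑ l, s l * U1 i' l = s j') →
      (f (U1, U2) i < f (U1, U2) i' ↔ g (U1, U2) j < g (U1, U2) j') := fun U2 _ _ _ _ hi hi' => by
    rw [hQ, QBR_eq_softmax, softmax_lt_softmax_iff, hi, hi', mul_lt_mul_iff_right₀ hlam]
  have h0 : ∀ s : Fin m → ℝ, ∑ l, s l * U1 i0 l = s j0 := by simp [U1, Pi.single_apply]
  have h1 : ∀ s : Fin m → ℝ, ∑ l, s l * U1 i1 l = s j1 := by simp [U1, Pi.single_apply, hi.symm]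
  obtain ⟨UA, hA⟩ := hg.exists_lt U1 hj
  obtain ⟨UB, hB⟩ := hg.exists_lt U1 hj.symm
  have hA' := (hlt UA h0 h1).2 hA
  have hB' := (hlt UB h1 h0).2 hB
  rw [hf U1 UA UB] at hA'
  exact lt_asymm hA' hB'

/-- A convex combination of elementary models whose potential functions are all
linear (as in ElementaryNet) is weakly non-strategic: it cannot be written as
quantal best response, with any positive precision, to any dominance-responsive
column-player behavioral model. -/
theorem elementarynet_weakly_nonstrategic {n m K : ℕ}
    (hn : 2 ≤ n) (hm : 2 ≤ m)
    (w : Fin K → ℝ) (hw0 : ∀ k, 0 ≤ w k) (hw1 : ∑ k, w k = 1)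
    (θx θy : Fin K → ℝ)
    (h : Fin K → Matrix (Fin n) (Fin m) ℝ → Fin n → ℝ)
    (hprob : ∀ k X, (∀ i, 0 ≤ h k X i) ∧ ∑ i, h k X i = 1)
    (f : Game n m → Fin n → ℝ)
    (hf : ∀ (G : Game n m) (i : Fin n),
      f G i = ∑ k, w k * h k (fun a b => θx k * G.1 a b + θy k * G.2 a b) i) :
    ¬ ∃ lam : ℝ, 0 < lam ∧ ∃ g : Game n m → Fin m → ℝ,
        (∀ G : Game n m, (∀ j, 0 ≤ g G j) ∧ ∑ j, g G j = 1) ∧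
        DominanceResponsiveCol g ∧
        ∀ G : Game n m, f G = QBR G.1 (g G) lam := by
  rintro ⟨lam, hlam, g, hg, hdom, hQ⟩
  have := Fin.nontrivial_iff_two_le.mpr hn
  obtain ⟨i0⟩ : Nonempty (Fin n) := inferInstance
  have hsoft : ∀ a (V : Matrix (Fin n) (Fin m) ℝ),
      ∑ k, w k * h k (fun i j => θx k * a i + θy k * V i j) i0 = softmax (lam • a) i0 := by
    intro a V
    have := congrFun (hQ (fun i _ => a i, V)) i0
    rw [hf, QBR_eq_softmax_of_forall_eq (U1 := (fun i _ => a i, V).1) (fun _ _ => rfl) (hg _).2]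
      at this
    exact this
  have hw : ∀ k, θy k ≠ 0 → w k = 0 := fun k =>
    weight_eq_zero_of_forall_sum_eq hw0 hw1
      (fun k X => ⟨(hprob k X).1 i0, (hprob k X).2 ▸ single_le_sum (fun i _ => (hprob k X).1 i)
        (mem_univ i0)⟩)
      (fun ε hε => (exists_softmax_lt i0 hε).imp' (lam⁻¹ • ·) fun v hv => by
        rwa [smul_inv_smul₀ hlam.ne'])
      (fun ε hε => (exists_one_sub_lt_softmax i0 hε).imp' (lam⁻¹ • ·) fun v hv => by
        rwa [smul_inv_smul₀ hlam.ne'])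
      hsoft
  refine hdom.not_forall_eq_QBR hn hm (fun U1 U2 U2' => funext fun i => ?_) hlam hQ
  simp only [hf]
  refine sum_congr rfl fun k _ => ?_
  rcases eq_or_ne (θy k) 0 with h0 | h0
  · simp [h0]
  · simp [hw k h0]
end

section
/- Let U² ∈ ℝ^{n×m} and C_gap > 0, and suppose that any two distinct entries of U² differ by at least C_gap, i.e., |U²_{ij} − U²_{i'j'}| ≥ C_gap whenever (i, j) ≠ (i', j'). Let j* be the (unique) column containing the maximum entry of U². Then the matrix B := relu(colmax(U²)/C_gap − rowmax(colmax(U²))/C_gap + 1) satisfies B_{ij} = 1 if j = j* and B_{ij} = 0 otherwise, for all i and j. -/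
/-- `rowmax X` replaces each entry of `X` by the maximum entry in its row. -/
noncomputable def rowmax {n m : ℕ} (X : Matrix (Fin n) (Fin m) ℝ) :
    Matrix (Fin n) (Fin m) ℝ :=
  fun i _ => ⨆ a : Fin m, X i a

/-- `colmax X` replaces each entry of `X` by the maximum entry in its column. -/
noncomputable def colmax {n m : ℕ} (X : Matrix (Fin n) (Fin m) ℝ) :
    Matrix (Fin n) (Fin m) ℝ :=
  fun _ j => ⨆ a : Fin n, X a j

/-- The rectified linear unit `relu(x) = max {0, x}`. -/
def relu (x : ℝ) : ℝ := max 0 x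

/-- If all entries of `U2` pairwise differ by at least `C_gap > 0`, and `j*` is the
column containing the maximum entry of `U2`, then
`B = relu(colmax(U2)/C_gap − rowmax(colmax(U2))/C_gap + 1)` is the indicator matrix
of column `j*`. -/
theorem maxmax_column_indicator {n m : ℕ} (hn : 0 < n) (hm : 0 < m)
    (U2 : Matrix (Fin n) (Fin m) ℝ) (Cgap : ℝ) (hgap : 0 < Cgap)
    (hdistinct : ∀ (i i' : Fin n) (j j' : Fin m),
      (i, j) ≠ (i', j') → Cgap ≤ |U2 i j - U2 i' j'|)
    (js : Fin m) (i0 : Fin n) (hmax : ∀ (i : Fin n) (j : Fin m), U2 i j ≤ U2 i0 js) :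
    ∀ (i : Fin n) (j : Fin m),
      relu (colmax U2 i j / Cgap - rowmax (colmax U2) i j / Cgap + 1)
        = if j = js then 1 else 0 := by
  have hne : Nonempty (Fin n) := ⟨⟨0, hn⟩⟩
  set M : ℝ := U2 i0 js with hM
  -- colmax of column js equals M
  have hcoljs : ∀ i : Fin n, colmax U2 i js = M := by
    intro i
    apply le_antisymm
    · exact ciSup_le fun a => hmax a js
    · exact le_ciSup (f := fun a => U2 a js) (Set.Finite.bddAbove (Set.finite_range _)) i0
  -- rowmax of colmax equals M everywhere
  have hrow : ∀ i j, rowmax (colmax U2) i j = M := by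
    intro i j
    apply le_antisymm
    · have hnem : Nonempty (Fin m) := ⟨⟨0, hm⟩⟩
      exact ciSup_le fun a => ciSup_le fun b => hmax b a
    · have := le_ciSup (f := fun a => colmax U2 i a)
        (Set.Finite.bddAbove (Set.finite_range _)) js
      rw [hcoljs i] at this
      exact this
  intro i j
  rw [hrow]
  by_cases hj : j = js
  · subst hj
    rw [hcoljs i]
    have : M / Cgap - M / Cgap + 1 = 1 := by ring
    rw [this]
    simp [relu]
  · -- column max of j is attained at some i1
    obtain ⟨i1, hi1⟩ := Finite.exists_max fun a : Fin n => U2 a j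
    have hcol : colmax U2 i j = U2 i1 j := by
      apply le_antisymm
      · exact ciSup_le hi1
      · exact le_ciSup (f := fun a => U2 a j) (Set.Finite.bddAbove (Set.finite_range _)) i1
    rw [hcol]
    have hne' : ((i1 : Fin n), j) ≠ (i0, js) := by
      simp [Prod.ext_iff, hj]
    have hgap' := hdistinct i1 i0 j js hne'
    have hle : U2 i1 j ≤ M := hmax i1 j
    rw [abs_sub_comm, abs_of_nonneg (by linarith)] at hgap'
    have hx : U2 i1 j / Cgap - M / Cgap + 1 ≤ 0 := by
      rw [div_sub_div_same]
      have : (U2 i1 j - M) / Cgap ≤ -1 := by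
        rw [div_le_iff₀ hgap]; linarith
      linarith
    simp only [relu, if_neg hj]
    exact max_eq_left hx
end

section
/- Let C_max, C_gap > 0 and let G = (U¹, U²) be a 2-player n×m normal-form game such that every entry of U¹ and U² lies in [0, C_max] and any two distinct payoff entries (among all 2nm entries of U¹ and U²) differ by at least C_gap. Let j* be the (unique) maxmax column action of the column player, i.e., the unique maximizer over j of max_i U²_{ij}. Define M_c = colmax(U²), M_* = rowmax(M_c), B = relu(M_c/C_gap − M_*/C_gap + 1), E = relu(U¹ + C_max·B − C_max), and Q = softmax of the vector of row sums (Σ_{j=1}^m E_{ij})_{i=1}^n. Then for every row action i, Q_i = exp(U¹_{ij*}) / Σ_{i'=1}^n exp(U¹_{i'j*}); that is, Q equals the quantal best response with precision 1 of the row player to the column player playing the maxmax action j* with probability 1. -/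
/-- For a game `(U1, U2)` with all payoffs in `[0, C_max]`, all `2nm` payoff entries
pairwise differing by at least `C_gap`, and `j*` the unique maxmax column action,
the GameNet computation `Q = softmax(row sums of relu(U1 + C_max·B − C_max))` with
`B = relu(colmax(U2)/C_gap − rowmax(colmax(U2))/C_gap + 1)` equals the row player's
quantal best response with precision 1 to the column player playing `j*`. -/
theorem gamenet_computes_qbr_to_maxmax {n m : ℕ} (hn : 0 < n) (hm : 0 < m)
    (U1 U2 : Matrix (Fin n) (Fin m) ℝ) (Cmax Cgap : ℝ)
    (hCmax : 0 < Cmax) (hCgap : 0 < Cgap)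
    (hbound1 : ∀ (i : Fin n) (j : Fin m), U1 i j ∈ Set.Icc (0 : ℝ) Cmax)
    (hbound2 : ∀ (i : Fin n) (j : Fin m), U2 i j ∈ Set.Icc (0 : ℝ) Cmax)
    (hdistinct1 : ∀ (i i' : Fin n) (j j' : Fin m),
      (i, j) ≠ (i', j') → Cgap ≤ |U1 i j - U1 i' j'|)
    (hdistinct2 : ∀ (i i' : Fin n) (j j' : Fin m),
      (i, j) ≠ (i', j') → Cgap ≤ |U2 i j - U2 i' j'|)
    (hdistinct12 : ∀ (i i' : Fin n) (j j' : Fin m), Cgap ≤ |U1 i j - U2 i' j'|)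
    (js : Fin m)
    (hjs : ∀ j : Fin m, j ≠ js → (⨆ i : Fin n, U2 i j) < ⨆ i : Fin n, U2 i js)
    (Mc Ms B E : Matrix (Fin n) (Fin m) ℝ) (Q : Fin n → ℝ)
    (hMc : Mc = colmax U2)
    (hMs : Ms = rowmax Mc)
    (hB : ∀ (i : Fin n) (j : Fin m),
      B i j = relu (Mc i j / Cgap - Ms i j / Cgap + 1))
    (hE : ∀ (i : Fin n) (j : Fin m),
      E i j = relu (U1 i j + Cmax * B i j - Cmax))
    (hQ : ∀ i : Fin n,
      Q i = Real.exp (∑ j, E i j) / ∑ i', Real.exp (∑ j, E i' j)) :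
    ∀ i : Fin n, Q i = Real.exp (U1 i js) / ∑ i', Real.exp (U1 i' js) := by
  haveI : Nonempty (Fin n) := ⟨⟨0, hn⟩⟩
  haveI : Nonempty (Fin m) := ⟨⟨0, hm⟩⟩
  obtain ⟨b, hb⟩ := Finite.exists_max (fun a => U2 a js)
  have hsup_js : (⨆ a, U2 a js) = U2 b js :=
    le_antisymm (ciSup_le hb) (le_ciSup (f := fun a => U2 a js) (Set.Finite.bddAbove (Set.finite_range _)) b)
  have hMcv : ∀ (i : Fin n) (j : Fin m), Mc i j = ⨆ a, U2 a j := by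
    intro i j; rw [hMc]; rfl
  have hMsv : ∀ (i : Fin n) (j : Fin m), Ms i j = U2 b js := by
    intro i j
    rw [hMs]
    show (⨆ a, Mc i a) = U2 b js
    refine le_antisymm (ciSup_le ?_) ?_
    · intro a
      rw [hMcv]
      by_cases ha : a = js
      · subst ha; exact hsup_js.le
      · exact le_trans (hjs a ha).le hsup_js.le
    · calc U2 b js = Mc i js := by rw [hMcv, hsup_js]
        _ ≤ ⨆ a, Mc i a := le_ciSup (f := fun a => Mc i a) (Set.Finite.bddAbove (Set.finite_range _)) js
  have key : ∀ i, ∑ j, E i j = U1 i js := by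
    intro i
    have hEjs : E i js = U1 i js := by
      rw [hE, hB, hMcv, hMsv, hsup_js]
      have : U2 b js / Cgap - U2 b js / Cgap + 1 = 1 := by ring
      rw [this]
      have hr1 : relu 1 = 1 := by unfold relu; norm_num
      rw [hr1]
      have : U1 i js + Cmax * 1 - Cmax = U1 i js := by ring
      rw [this]
      exact max_eq_right (hbound1 i js).1
    have hE0 : ∀ j, j ≠ js → E i j = 0 := by
      intro j hj
      obtain ⟨a, ha⟩ := Finite.exists_max (fun x => U2 x j)
      have hsup_j : (⨆ x, U2 x j) = U2 a j :=
        le_antisymm (ciSup_le ha) (le_ciSup (f := fun x => U2 x j) (Set.Finite.bddAbove (Set.finite_range _)) a)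
      have hlt : U2 a j < U2 b js := by
        have := hjs j hj; rwa [hsup_j, hsup_js] at this
      have hgap : Cgap ≤ U2 b js - U2 a j := by
        have := hdistinct2 a b j js (by simp [hj])
        rw [abs_of_neg (by linarith : U2 a j - U2 b js < 0)] at this
        linarith
      have hB0 : B i j = 0 := by
        rw [hB, hMcv, hMsv, hsup_j]
        have h1 : U2 a j / Cgap - U2 b js / Cgap + 1 ≤ 0 := by
          have heq : U2 a j / Cgap - U2 b js / Cgap = (U2 a j - U2 b js) / Cgap := by ring
          rw [heq]
          have : (U2 a j - U2 b js) / Cgap ≤ -1 := by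
            rw [div_le_iff₀ hCgap]; linarith
          linarith
        exact max_eq_left h1
      rw [hE, hB0]
      have : U1 i j + Cmax * 0 - Cmax = U1 i j - Cmax := by ring
      rw [this]
      exact max_eq_left (by linarith [(hbound1 i j).2])
    rw [Finset.sum_eq_single_of_mem js (Finset.mem_univ js) (fun j _ hj => hE0 j hj)]
    exact hEjs
  intro i
  rw [hQ, key i]
  congr 1
  exact Finset.sum_congr rfl fun i' _ => by rw [key i']
end

section
/- Let C_max, C_gap > 0 and let G = (U¹, U²) be a 2-player n×m normal-form game such that every entry of U¹ and U² lies in [−C_max, C_max] and any two distinct payoff entries (among all 2nm entries of U¹ and U²) differ by at least C_gap. Let j* be the (unique) maxmax column action of the column player, i.e., the unique maximizer over j of max_i U²_{ij}. Define M_c' = colmax(U² + C_max), M_*' = rowmax(M_c'), B' = relu(M_c'/C_gap − M_*'/C_gap + 1), E' = relu(U¹ + 2C_max·B' − C_max), and Q' = softmax of the vector of row sums (Σ_{j=1}^m E'_{ij})_{i=1}^n. Then for every row action i, Q'_i = exp(U¹_{ij*}) / Σ_{i'=1}^n exp(U¹_{i'j*}); that is, Q' equals the quantal best response with precision 1 of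 the row player to the column player playing the maxmax action j* with probability 1. -/
/-!
Shifting the payoffs of the column player by `C_max` shifts every column maximum by the
same amount, so `M_c' - M_*'` vanishes in the maxmax column `j*` and, by the payoff gap, is at
most `-C_gap` in every other column. Hence `B'` is the indicator of column `j*`. Since
`U¹ ∈ [-C_max, C_max]`, the ReLU in `E'` then passes `U¹ + C_max` in column `j*` and kills
every other column, so the row sums of `E'` are `U¹_{i j*} + C_max`, and softmax forgets the
common shift `C_max`.
-/

open Finset Real

lemma relu_of_nonneg {x : ℝ} (hx : 0 ≤ x) : relu x = x := max_eq_right hx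

lemma relu_of_nonpos {x : ℝ} (hx : x ≤ 0) : relu x = 0 := max_eq_left hx

lemma relu_div_sub_div_add_one_of_le_sub {x y g : ℝ} (hg : 0 < g) (h : g ≤ y - x) :
    relu (x / g - y / g + 1) = 0 := by
  refine relu_of_nonpos ?_
  have : x / g - y / g ≤ -1 := by
    rw [div_sub_div_same, div_le_iff₀ hg]
    linarith
  linarith

lemma le_sub_of_lt_of_separated {α : Type*} {f : α → ℝ} {g : ℝ}
    (hf : ∀ a b, a ≠ b → g ≤ |f a - f b|) {a b : α} (h : f a < f b) : g ≤ f b - f a := by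
  have := hf a b (fun hab => h.ne (congrArg f hab))
  rwa [abs_of_neg (sub_neg.2 h), neg_sub] at this

lemma ciSup_eq_apply_of_forall_le {ι α : Type*} [ConditionallyCompleteLattice α] {f : ι → α}
    {i₀ : ι} (h : ∀ i, f i ≤ f i₀) : ⨆ i, f i = f i₀ :=
  haveI : Nonempty ι := ⟨i₀⟩
  le_antisymm (ciSup_le h) (le_ciSup ⟨f i₀, Set.forall_mem_range.2 h⟩ i₀)

lemma colmax_add_const {n m : ℕ} [Nonempty (Fin n)] (X : Matrix (Fin n) (Fin m) ℝ) (c : ℝ)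
    (i : Fin n) (j : Fin m) : colmax (fun i j => X i j + c) i j = (⨆ a, X a j) + c :=
  ((OrderIso.addRight c).map_ciSup (Finite.bddAbove_range fun a => X a j)).symm

lemma le_ciSup_sub_ciSup_of_lt {ι κ : Type*} [Finite ι] [Nonempty ι] {X : ι → κ → ℝ} {g : ℝ}
    (hX : ∀ i i' j j', (i, j) ≠ (i', j') → g ≤ |X i j - X i' j'|) {j j' : κ}
    (h : ⨆ i, X i j < ⨆ i, X i j') : g ≤ (⨆ i, X i j') - ⨆ i, X i j := by
  obtain ⟨i, hi⟩ := exists_eq_ciSup_of_finite (f := fun i => X i j)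
  obtain ⟨i', hi'⟩ := exists_eq_ciSup_of_finite (f := fun i => X i j')
  rw [← hi, ← hi'] at h ⊢
  exact le_sub_of_lt_of_separated (f := fun p : ι × κ => X p.1 p.2)
    (a := (i, j)) (b := (i', j')) (fun p q hpq => hX p.1 q.1 p.2 q.2 hpq) h

lemma exp_add_div_sum_exp_add {ι : Type*} [Fintype ι] (f : ι → ℝ) (c : ℝ) (i : ι) :
    exp (f i + c) / ∑ k, exp (f k + c) = exp (f i) / ∑ k, exp (f k) := by
  simp only [exp_add, ← sum_mul]
  exact mul_div_mul_right _ _ (exp_pos c).ne'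

theorem gamenet_computes_qbr_to_maxmax_negative_general {n m : ℕ}
    (U1 U2 : Matrix (Fin n) (Fin m) ℝ) (Cmax Cgap : ℝ)
    (hCgap : 0 < Cgap)
    (hbound1 : ∀ (i : Fin n) (j : Fin m), U1 i j ∈ Set.Icc (-Cmax) Cmax)
    (hdistinct2 : ∀ (i i' : Fin n) (j j' : Fin m),
      (i, j) ≠ (i', j') → Cgap ≤ |U2 i j - U2 i' j'|)
    (js : Fin m)
    (hjs : ∀ j : Fin m, j ≠ js → (⨆ i : Fin n, U2 i j) < ⨆ i : Fin n, U2 i js)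
    (Mc Ms B E : Matrix (Fin n) (Fin m) ℝ) (Q : Fin n → ℝ)
    (hMc : Mc = colmax (fun i j => U2 i j + Cmax))
    (hMs : Ms = rowmax Mc)
    (hB : ∀ (i : Fin n) (j : Fin m),
      B i j = relu (Mc i j / Cgap - Ms i j / Cgap + 1))
    (hE : ∀ (i : Fin n) (j : Fin m),
      E i j = relu (U1 i j + 2 * Cmax * B i j - Cmax))
    (hQ : ∀ i : Fin n,
      Q i = Real.exp (∑ j, E i j) / ∑ i', Real.exp (∑ j, E i' j)) :
    ∀ i : Fin n, Q i = Real.exp (U1 i js) / ∑ i', Real.exp (U1 i' js) := by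
  intro i
  have : Nonempty (Fin n) := ⟨i⟩
  have hMc' (i : Fin n) (j : Fin m) : Mc i j = (⨆ a, U2 a j) + Cmax :=
    hMc ▸ colmax_add_const U2 Cmax i j
  have hMs' (i : Fin n) (j : Fin m) : Ms i j = Mc i js := by
    refine hMs ▸ ciSup_eq_apply_of_forall_le fun b => ?_
    rw [hMc', hMc']
    rcases eq_or_ne b js with rfl | hb
    exacts [le_rfl, by linarith [hjs b hb]]
  have hBjs (i : Fin n) : B i js = 1 := by simp [hB, hMs', relu]
  have hBj (i : Fin n) (j : Fin m) (hj : j ≠ js) : B i j = 0 := by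
    rw [hB, hMs', hMc', hMc', relu_div_sub_div_add_one_of_le_sub hCgap]
    linarith [le_ciSup_sub_ciSup_of_lt hdistinct2 (hjs j hj)]
  have hrow (i : Fin n) : ∑ j, E i j = U1 i js + Cmax := by
    have hoff (j : Fin m) (hj : j ≠ js) : E i j = 0 := by
      rw [hE, hBj i j hj, relu_of_nonpos]
      linarith [(hbound1 i j).2]
    rw [sum_eq_single js (fun j _ => hoff j) (by simp), hE, hBjs, relu_of_nonneg] <;>
      linarith [(hbound1 i js).1]
  rw [hQ]
  simp only [hrow]
  exact exp_add_div_sum_exp_add (fun k => U1 k js) Cmax i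

/-- For a game `(U1, U2)` with all payoffs in `[−C_max, C_max]`, all `2nm` payoff
entries pairwise differing by at least `C_gap`, and `j*` the unique maxmax column
action, the modified GameNet computation
`Q' = softmax(row sums of relu(U1 + 2C_max·B' − C_max))` with
`B' = relu(colmax(U2 + C_max)/C_gap − rowmax(colmax(U2 + C_max))/C_gap + 1)` equals
the row player's quantal best response with precision 1 to the column player
playing `j*`. -/
theorem gamenet_computes_qbr_to_maxmax_negative {n m : ℕ} (hn : 0 < n) (hm : 0 < m)
    (U1 U2 : Matrix (Fin n) (Fin m) ℝ) (Cmax Cgap : ℝ)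
    (hCmax : 0 < Cmax) (hCgap : 0 < Cgap)
    (hbound1 : ∀ (i : Fin n) (j : Fin m), U1 i j ∈ Set.Icc (-Cmax) Cmax)
    (hbound2 : ∀ (i : Fin n) (j : Fin m), U2 i j ∈ Set.Icc (-Cmax) Cmax)
    (hdistinct1 : ∀ (i i' : Fin n) (j j' : Fin m),
      (i, j) ≠ (i', j') → Cgap ≤ |U1 i j - U1 i' j'|)
    (hdistinct2 : ∀ (i i' : Fin n) (j j' : Fin m),
      (i, j) ≠ (i', j') → Cgap ≤ |U2 i j - U2 i' j'|)
    (hdistinct12 : ∀ (i i' : Fin n) (j j' : Fin m), Cgap ≤ |U1 i j - U2 i' j'|)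
    (js : Fin m)
    (hjs : ∀ j : Fin m, j ≠ js → (⨆ i : Fin n, U2 i j) < ⨆ i : Fin n, U2 i js)
    (Mc Ms B E : Matrix (Fin n) (Fin m) ℝ) (Q : Fin n → ℝ)
    (hMc : Mc = colmax (fun i j => U2 i j + Cmax))
    (hMs : Ms = rowmax Mc)
    (hB : ∀ (i : Fin n) (j : Fin m),
      B i j = relu (Mc i j / Cgap - Ms i j / Cgap + 1))
    (hE : ∀ (i : Fin n) (j : Fin m),
      E i j = relu (U1 i j + 2 * Cmax * B i j - Cmax))
    (hQ : ∀ i : Fin n,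
      Q i = Real.exp (∑ j, E i j) / ∑ i', Real.exp (∑ j, E i' j)) :
    ∀ i : Fin n, Q i = Real.exp (U1 i js) / ∑ i', Real.exp (U1 i' js) :=
  gamenet_computes_qbr_to_maxmax_negative_general U1 U2 Cmax Cgap hCgap hbound1 hdistinct2 js hjs Mc
    Ms B E Q hMc hMs hB hE hQ
end
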